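/- In the origami monoid O_n, for any generators x, y ∈ {α_1,...,α_{n-1}, β_1,...,β_{n-1}} and any index i, the contextual commutation relation x α_i β_i y = x β_i α_i y holds. -/
import Mathlib


namespace Origami

/-- Generators of the origami monoid: a type bit (`true` for α, `false` for β)
and an index in `Fin (n-1)` (so indices `1,…,n-1` are represented by `0,…,n-2`). -/
inductive Gen (n : ℕ) : Type
  | mk (t : Bool) (i : Fin (n - 1))
deriving DecidableEq

/-- Words over the generators. -/
abbrev W (n : ℕ) := FreeMonoid (Gen n)

/-- The word consisting of the single generator of type `t` and index `i`. -/
def go {n : ℕ} (t : Bool) (i : Fin (n - 1)) : W n := FreeMonoid.of (Gen.mk t i)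

/-- `|i - j| = 1`. -/
def adj {n : ℕ} (i j : Fin (n - 1)) : Prop := i.val + 1 = j.val ∨ j.val + 1 = i.val

/-- `|i - j| ≥ 2`. -/
def far {n : ℕ} (i j : Fin (n - 1)) : Prop := i.val + 2 ≤ j.val ∨ j.val + 2 ≤ i.val

/-- The defining relations (1)–(5), (1a), (2a), (3a) of the origami monoid. -/
inductive Rel (n : ℕ) : W n → W n → Prop
  | idem (t : Bool) (i : Fin (n - 1)) : Rel n (go t i * go t i) (go t i)
  | jones (t : Bool) (i j : Fin (n - 1)) (h : adj i j) :
      Rel n (go t i * go t j * go t i) (go t i)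
  | inter (t : Bool) (i j : Fin (n - 1)) (h : i ≠ j) :
      Rel n (go t i * go (!t) j) (go (!t) j * go t i)
  | intra (t : Bool) (i j : Fin (n - 1)) (h : far i j) :
      Rel n (go t i * go t j) (go t j * go t i)
  | idemA (t : Bool) (i : Fin (n - 1)) :
      Rel n (go t i * go (!t) i * (go t i * go (!t) i)) (go t i * go (!t) i)
  | jonesA (t : Bool) (i j : Fin (n - 1)) (h : adj i j) :
      Rel n (go t i * go (!t) i * (go t j * go (!t) j) * (go t i * go (!t) i))
            (go t i * go (!t) i)

/-- The congruence generated by the origami relations. -/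
def oriCon (n : ℕ) : Con (W n) := conGen (Rel n)

/-- The origami monoid `O_n`. -/
abbrev O (n : ℕ) := (oriCon n).Quotient

/-- The image of a generator in `O_n`. -/
def gen {n : ℕ} (t : Bool) (i : Fin (n - 1)) : O n := (oriCon n).mk' (go t i)

/-- The generator `α_i`. -/
def genA {n : ℕ} (i : Fin (n - 1)) : O n := gen true i

/-- The generator `β_i`. -/
def genB {n : ℕ} (i : Fin (n - 1)) : O n := gen false i

end Origami


namespace OrigamiAux
open Origami

variable {n : ℕ}

lemma relq {w w' : W n} (h : Rel n w w') : (oriCon n).mk' w = (oriCon n).mk' w' := by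
  apply (Con.eq _).mpr
  exact ConGen.Rel.of _ _ h

lemma gen_mk (t : Bool) (i : Fin (n-1)) : (oriCon n).mk' (go t i) = gen t i := rfl

lemma bool_cases (u t : Bool) : u = t ∨ u = !t := by
  cases u <;> cases t <;> simp

lemma adj_ne {i j : Fin (n-1)} (h : adj i j) : i ≠ j := by
  intro e; subst e; unfold adj at h; omega

lemma far_ne {i j : Fin (n-1)} (h : far i j) : i ≠ j := by
  intro e; subst e; unfold far at h; omega

lemma idemc (t : Bool) (i : Fin (n-1)) (x : O n) :
    gen t i * (gen t i * x) = gen t i * x := by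
  have h := relq (Rel.idem (n := n) t i)
  simp only [map_mul, gen_mk] at h
  simp only [← mul_assoc] at h ⊢
  rw [h]

lemma jonesc (t : Bool) (i j : Fin (n-1)) (h : adj i j) (x : O n) :
    gen t i * (gen t j * (gen t i * x)) = gen t i * x := by
  have h0 := relq (Rel.jones (n := n) t i j h)
  simp only [map_mul, gen_mk] at h0
  simp only [← mul_assoc] at h0 ⊢
  rw [h0]

lemma interc (t : Bool) (i j : Fin (n-1)) (h : i ≠ j) (x : O n) :
    gen t i * (gen (!t) j * x) = gen (!t) j * (gen t i * x) := by
  have h0 := relq (Rel.inter (n := n) t i j h)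
  simp only [map_mul, gen_mk] at h0
  simp only [← mul_assoc] at h0 ⊢
  rw [h0]

lemma intrac (t : Bool) (i j : Fin (n-1)) (h : far i j) (x : O n) :
    gen t i * (gen t j * x) = gen t j * (gen t i * x) := by
  have h0 := relq (Rel.intra (n := n) t i j h)
  simp only [map_mul, gen_mk] at h0
  simp only [← mul_assoc] at h0 ⊢
  rw [h0]

lemma idemAc (t : Bool) (i : Fin (n-1)) (x : O n) :
    gen t i * (gen (!t) i * (gen t i * (gen (!t) i * x))) = gen t i * (gen (!t) i * x) := by
  have h0 := relq (Rel.idemA (n := n) t i)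
  simp only [map_mul, gen_mk] at h0
  simp only [← mul_assoc] at h0 ⊢
  rw [h0]

lemma jonesAc (t : Bool) (i j : Fin (n-1)) (h : adj i j) (x : O n) :
    gen t i * (gen (!t) i * (gen t j * (gen (!t) j * (gen t i * (gen (!t) i * x))))) =
      gen t i * (gen (!t) i * x) := by
  have h0 := relq (Rel.jonesA (n := n) t i j h)
  simp only [map_mul, gen_mk] at h0
  simp only [← mul_assoc] at h0 ⊢
  rw [h0]

lemma commf {i q : Fin (n-1)} (h : far i q) (t u : Bool) (x : O n) :
    gen t i * (gen u q * x) = gen u q * (gen t i * x) := by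
  rcases bool_cases u t with h1 | h1 <;> rw [h1]
  · exact intrac t i q h x
  · exact interc t i q (far_ne h) x

/-- Right absorption: `a b b' a = a b b'` (`j` adjacent to `i`). -/
lemma T (t : Bool) (i j : Fin (n-1)) (h : adj i j) (x : O n) :
    gen t i * (gen (!t) i * (gen (!t) j * (gen t i * x))) =
      gen t i * (gen (!t) i * (gen (!t) j * x)) := by
  have hne : i ≠ j := adj_ne h
  have hji : adj j i := h.symm
  calc gen t i * (gen (!t) i * (gen (!t) j * (gen t i * x)))
      = gen t i * (gen (!t) i * (gen t j * (gen (!t) j * (gen t i * (gen (!t) i *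
          (gen (!t) j * (gen t i * x))))))) := by
        rw [jonesAc t i j h (gen (!t) j * (gen t i * x))]
    _ = gen t i * (gen (!t) i * (gen t j * (gen t i * (gen (!t) j * (gen (!t) i *
          (gen (!t) j * (gen t i * x))))))) := by
        rw [interc t i j hne (gen (!t) i * (gen (!t) j * (gen t i * x)))]
    _ = gen t i * (gen (!t) i * (gen t j * (gen t i * (gen (!t) j * (gen t i * x))))) := by
        rw [jonesc (!t) j i hji (gen t i * x)]
    _ = gen t i * (gen (!t) i * (gen t j * (gen t i * (gen t i * (gen (!t) j * x))))) := by
        rw [← interc t i j hne x]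
    _ = gen t i * (gen (!t) i * (gen t j * (gen t i * (gen (!t) j * x)))) := by
        rw [idemc t i (gen (!t) j * x)]
    _ = gen t i * (gen (!t) i * (gen t j * (gen t i * (gen (!t) j * (gen (!t) i *
          (gen (!t) j * x)))))) := by
        rw [jonesc (!t) j i hji x]
    _ = gen t i * (gen (!t) i * (gen t j * (gen (!t) j * (gen t i * (gen (!t) i *
          (gen (!t) j * x)))))) := by
        rw [interc t i j hne (gen (!t) i * (gen (!t) j * x))]
    _ = gen t i * (gen (!t) i * (gen (!t) j * x)) := by
        rw [jonesAc t i j h (gen (!t) j * x)]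

/-- The type-flipped instance of `T`. -/
lemma U (t : Bool) (i j : Fin (n-1)) (h : adj i j) (x : O n) :
    gen (!t) i * (gen t i * (gen t j * (gen (!t) i * x))) =
      gen (!t) i * (gen t i * (gen t j * x)) := by
  simpa only [Bool.not_not] using T (!t) i j h x

/-- Left absorption (mirror of `T`): `a b' b a = b' b a`. -/
lemma Tm (t : Bool) (i j : Fin (n-1)) (h : adj i j) (x : O n) :
    gen t i * (gen (!t) j * (gen (!t) i * (gen t i * x))) =
      gen (!t) j * (gen (!t) i * (gen t i * x)) := by
  have hne : i ≠ j := adj_ne h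
  have hji : adj j i := h.symm
  have hJ : ∀ y : O n,
      gen (!t) i * (gen t i * (gen (!t) j * (gen t j * (gen (!t) i * (gen t i * y))))) =
        gen (!t) i * (gen t i * y) := by
    intro y; simpa only [Bool.not_not] using jonesAc (!t) i j h y
  calc gen t i * (gen (!t) j * (gen (!t) i * (gen t i * x)))
      = gen t i * (gen (!t) j * (gen (!t) i * (gen t i * (gen (!t) j * (gen t j *
          (gen (!t) i * (gen t i * x))))))) := by
        rw [hJ x]
    _ = gen t i * (gen (!t) j * (gen (!t) i * (gen (!t) j * (gen t i * (gen t j *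
          (gen (!t) i * (gen t i * x))))))) := by
        rw [interc t i j hne (gen t j * (gen (!t) i * (gen t i * x)))]
    _ = gen t i * (gen (!t) j * (gen t i * (gen t j * (gen (!t) i * (gen t i * x))))) := by
        rw [jonesc (!t) j i hji (gen t i * (gen t j * (gen (!t) i * (gen t i * x))))]
    _ = gen (!t) j * (gen t i * (gen t i * (gen t j * (gen (!t) i * (gen t i * x))))) := by
        rw [interc t i j hne (gen t i * (gen t j * (gen (!t) i * (gen t i * x))))]
    _ = gen (!t) j * (gen t i * (gen t j * (gen (!t) i * (gen t i * x)))) := by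
        rw [idemc t i (gen t j * (gen (!t) i * (gen t i * x)))]
    _ = gen (!t) j * (gen (!t) i * (gen (!t) j * (gen t i * (gen t j * (gen (!t) i *
          (gen t i * x)))))) := by
        rw [jonesc (!t) j i hji (gen t i * (gen t j * (gen (!t) i * (gen t i * x))))]
    _ = gen (!t) j * (gen (!t) i * (gen t i * (gen (!t) j * (gen t j * (gen (!t) i *
          (gen t i * x)))))) := by
        rw [← interc t i j hne (gen t j * (gen (!t) i * (gen t i * x)))]
    _ = gen (!t) j * (gen (!t) i * (gen t i * x)) := by
        rw [hJ x]

/-- The type-flipped instance of `Tm`. -/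
lemma Um (t : Bool) (i j : Fin (n-1)) (h : adj i j) (x : O n) :
    gen (!t) i * (gen t j * (gen t i * (gen (!t) i * x))) =
      gen t j * (gen t i * (gen (!t) i * x)) := by
  simpa only [Bool.not_not] using Tm (!t) i j h x

/-- Right absorption of the middle letter: `a b a y = a b y` for any generator `y`. -/
lemma Wlem : ∀ (d : ℕ) (t u : Bool) (i q : Fin (n-1)),
    (i.val - q.val) + (q.val - i.val) = d → ∀ x : O n,
    gen t i * (gen (!t) i * (gen t i * (gen u q * x))) =
      gen t i * (gen (!t) i * (gen u q * x)) := by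
  intro d
  induction d using Nat.strong_induction_on with
  | _ d ih =>
    intro t u i q hd x
    by_cases hqi : q = i
    · subst hqi
      rcases bool_cases u t with h1 | h1 <;> rw [h1]
      · rw [idemc t q x]
      · rw [idemAc t q x, idemc (!t) q x]
    · have hv : q.val ≠ i.val := fun hh => hqi (Fin.ext hh)
      have htri : adj i q ∨ far i q := by unfold adj far; omega
      have hne : i ≠ q := Ne.symm hqi
      rcases htri with hadj | hfar
      · -- adjacent case
        rcases bool_cases u t with h1 | h1 <;> rw [h1]
        · calc gen t i * (gen (!t) i * (gen t i * (gen t q * x)))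
              = gen t i * (gen (!t) i * (gen t i * (gen t q * (gen (!t) i * x)))) := by
                rw [U t i q hadj x]
            _ = gen t i * (gen (!t) i * (gen t i * (gen (!t) i * (gen t q * x)))) := by
                rw [interc t q i hqi (x := x)]
            _ = gen t i * (gen (!t) i * (gen t q * x)) := by
                rw [idemAc t i (gen t q * x)]
        · calc gen t i * (gen (!t) i * (gen t i * (gen (!t) q * x)))
              = gen t i * (gen (!t) i * (gen (!t) q * (gen t i * x))) := by
                rw [interc t i q hne x]
            _ = gen t i * (gen (!t) i * (gen (!t) q * x)) := T t i q hadj x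
      · -- far case : induct through an index adjacent to `q`, strictly closer to `i`
        have hiLt := i.isLt
        have hqLt := q.isLt
        obtain ⟨j, hqj, hlt⟩ : ∃ j : Fin (n-1), adj q j ∧
            (i.val - j.val) + (j.val - i.val) < d := by
          unfold far at hfar
          rcases hfar with hle | hle
          · exact ⟨⟨q.val - 1, by omega⟩, by unfold adj; simp; omega, by simp; omega⟩
          · exact ⟨⟨q.val + 1, by omega⟩, by unfold adj; simp, by simp; omega⟩
        calc gen t i * (gen (!t) i * (gen t i * (gen u q * x)))
            = gen t i * (gen (!t) i * (gen t i * (gen u q * (gen u j * (gen u q * x))))) := by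
              rw [jonesc u q j hqj x]
          _ = gen t i * (gen (!t) i * (gen u q * (gen t i * (gen u j * (gen u q * x))))) := by
              rw [commf hfar t u (gen u j * (gen u q * x))]
          _ = gen t i * (gen u q * (gen (!t) i * (gen t i * (gen u j * (gen u q * x))))) := by
              rw [commf hfar (!t) u (gen t i * (gen u j * (gen u q * x)))]
          _ = gen u q * (gen t i * (gen (!t) i * (gen t i * (gen u j * (gen u q * x))))) := by
              rw [commf hfar t u (gen (!t) i * (gen t i * (gen u j * (gen u q * x))))]
          _ = gen u q * (gen t i * (gen (!t) i * (gen u j * (gen u q * x)))) := by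
              rw [ih _ hlt t u i j rfl (gen u q * x)]
          _ = gen t i * (gen u q * (gen (!t) i * (gen u j * (gen u q * x)))) := by
              rw [← commf hfar t u (gen (!t) i * (gen u j * (gen u q * x)))]
          _ = gen t i * (gen (!t) i * (gen u q * (gen u j * (gen u q * x)))) := by
              rw [← commf hfar (!t) u (gen u j * (gen u q * x))]
          _ = gen t i * (gen (!t) i * (gen u q * x)) := by
              rw [jonesc u q j hqj x]

/-- Left absorption of the middle letter: `y a b a = y b a` for any generator `y`. -/
lemma Vlem : ∀ (d : ℕ) (t u : Bool) (i q : Fin (n-1)),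
    (i.val - q.val) + (q.val - i.val) = d → ∀ x : O n,
    gen u q * (gen t i * (gen (!t) i * (gen t i * x))) =
      gen u q * (gen (!t) i * (gen t i * x)) := by
  intro d
  induction d using Nat.strong_induction_on with
  | _ d ih =>
    intro t u i q hd x
    by_cases hqi : q = i
    · subst hqi
      rcases bool_cases u t with h1 | h1 <;> rw [h1]
      · rw [idemc t q (gen (!t) q * (gen t q * x))]
      · have hA : gen (!t) q * (gen t q * (gen (!t) q * (gen t q * x))) =
            gen (!t) q * (gen t q * x) := by
          simpa only [Bool.not_not] using idemAc (!t) q x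
        rw [hA, idemc (!t) q (gen t q * x)]
    · have hv : q.val ≠ i.val := fun hh => hqi (Fin.ext hh)
      have htri : adj i q ∨ far i q := by unfold adj far; omega
      have hne : i ≠ q := Ne.symm hqi
      rcases htri with hadj | hfar
      · rcases bool_cases u t with h1 | h1 <;> rw [h1]
        · have hA : gen (!t) i * (gen t i * (gen (!t) i * (gen t i * x))) =
              gen (!t) i * (gen t i * x) := by
            simpa only [Bool.not_not] using idemAc (!t) i x
          calc gen t q * (gen t i * (gen (!t) i * (gen t i * x)))
              = gen (!t) i * (gen t q * (gen t i * (gen (!t) i * (gen t i * x)))) := by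
                rw [Um t i q hadj (gen t i * x)]
            _ = gen t q * (gen (!t) i * (gen t i * (gen (!t) i * (gen t i * x)))) := by
                rw [← interc t q i hqi (x := gen t i * (gen (!t) i * (gen t i * x)))]
            _ = gen t q * (gen (!t) i * (gen t i * x)) := by
                rw [hA]
        · calc gen (!t) q * (gen t i * (gen (!t) i * (gen t i * x)))
              = gen t i * (gen (!t) q * (gen (!t) i * (gen t i * x))) := by
                rw [interc t i q hne (gen (!t) i * (gen t i * x))]
            _ = gen (!t) q * (gen (!t) i * (gen t i * x)) := Tm t i q hadj x
      · have hiLt := i.isLt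
        have hqLt := q.isLt
        obtain ⟨j, hqj, hlt⟩ : ∃ j : Fin (n-1), adj q j ∧
            (i.val - j.val) + (j.val - i.val) < d := by
          unfold far at hfar
          rcases hfar with hle | hle
          · exact ⟨⟨q.val - 1, by omega⟩, by unfold adj; simp; omega, by simp; omega⟩
          · exact ⟨⟨q.val + 1, by omega⟩, by unfold adj; simp, by simp; omega⟩
        calc gen u q * (gen t i * (gen (!t) i * (gen t i * x)))
            = gen u q * (gen u j * (gen u q * (gen t i * (gen (!t) i * (gen t i * x))))) := by
              rw [jonesc u q j hqj (gen t i * (gen (!t) i * (gen t i * x)))]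
          _ = gen u q * (gen u j * (gen t i * (gen u q * (gen (!t) i * (gen t i * x))))) := by
              rw [← commf hfar t u (gen (!t) i * (gen t i * x))]
          _ = gen u q * (gen u j * (gen t i * (gen (!t) i * (gen u q * (gen t i * x))))) := by
              rw [← commf hfar (!t) u (gen t i * x)]
          _ = gen u q * (gen u j * (gen t i * (gen (!t) i * (gen t i * (gen u q * x))))) := by
              rw [← commf hfar t u x]
          _ = gen u q * (gen u j * (gen (!t) i * (gen t i * (gen u q * x)))) := by
              rw [ih _ hlt t u i j rfl (gen u q * x)]
          _ = gen u q * (gen u j * (gen (!t) i * (gen u q * (gen t i * x)))) := by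
              rw [commf hfar t u x]
          _ = gen u q * (gen u j * (gen u q * (gen (!t) i * (gen t i * x)))) := by
              rw [commf hfar (!t) u (gen t i * x)]
          _ = gen u q * (gen (!t) i * (gen t i * x)) := by
              rw [jonesc u q j hqj (gen (!t) i * (gen t i * x))]

end OrigamiAux

open Origami in
/-- Contextual commutation: for any generators `x = γ_p` (type `s`) and `y = γ_q` (type `s'`)
and any index `i`, `x α_i β_i y = x β_i α_i y`. -/
theorem origami_contextual_commutation (n : ℕ) (s s' : Bool) (p q i : Fin (n - 1)) :
    gen s p * genA i * genB i * gen s' q = gen s p * genB i * genA i * gen s' q := by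
  have hW := OrigamiAux.Wlem ((i.val - q.val) + (q.val - i.val)) false s' i q rfl
    ((1 : O n))
  simp only [Bool.not_false] at hW
  have hV := OrigamiAux.Vlem ((i.val - p.val) + (p.val - i.val)) true s i p rfl
    (gen s' q * (1 : O n))
  simp only [Bool.not_true] at hV
  have hA := OrigamiAux.idemAc true i (gen s' q * (1 : O n))
  simp only [Bool.not_true] at hA
  unfold genA genB
  simp only [mul_assoc]
  rw [← mul_one (gen s' q)]
  calc gen s p * (gen true i * (gen false i * (gen s' q * 1)))
      = gen s p * (gen true i * (gen false i * (gen true i * (gen false i *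
          (gen s' q * 1))))) := by rw [hA]
    _ = gen s p * (gen true i * (gen false i * (gen true i * (gen s' q * 1)))) := by
        rw [hW]
    _ = gen s p * (gen false i * (gen true i * (gen s' q * 1))) := hV
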